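/- Let R be a noetherian local ring with maximal ideal m, M an R-module of finite length, and φ : M → M an additive map satisfying φ(r·x) = r^p · φ(x) for a fixed ring endomorphism r ↦ r^p of R (Frobenius semilinearity, char R = p). Then for every x ∈ M there exist n ≥ 1 and elements c_0, …, c_{n−1} ∈ R such that φ^n(x) + c_{n−1} φ^{n−1}(x) + ⋯ + c_1 φ(x) + c_0 x = 0. -/

import Mathlib

/-!
The submodules spanned by `x, φ x, …, φⁿ x` form an ascending chain, which stabilizes because
a module of finite length is noetherian. Once it has stabilized, `φⁿ⁺¹ x` is an `R`-linear
combination of the lower iterates.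
-/

namespace Submodule

variable {R M : Type*} [Semiring R] [AddCommMonoid M] [Module R M]

theorem span_range_iterate_mono (f : M → M) (x : M) :
    Monotone fun n : ℕ => span R (Set.range fun i : Fin (n + 1) => f^[i] x) := by
  intro m n hmn
  refine span_mono ?_
  rintro _ ⟨i, rfl⟩
  exact ⟨Fin.castLE (by omega) i, rfl⟩

theorem exists_iterate_succ_mem_span_range_iterate [IsNoetherian R M] (f : M → M) (x : M) :
    ∃ n : ℕ, f^[n + 1] x ∈ span R (Set.range fun i : Fin (n + 1) => f^[i] x) := by
  obtain ⟨n, hn⟩ :=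
    monotone_stabilizes_iff_noetherian.mpr ‹_› ⟨_, span_range_iterate_mono (R := R) f x⟩
  refine ⟨n, ?_⟩
  rw [OrderHom.coe_mk] at hn
  rw [hn (n + 1) n.le_succ]
  exact subset_span ⟨Fin.last (n + 1), rfl⟩

end Submodule

theorem Module.exists_monic_iterate_relation {R M : Type*} [Ring R] [AddCommGroup M]
    [Module R M] [IsNoetherian R M] (f : M → M) (x : M) :
    ∃ n : ℕ, 0 < n ∧ ∃ c : Fin n → R, f^[n] x + ∑ i : Fin n, c i • f^[(i : ℕ)] x = 0 := by
  obtain ⟨n, hn⟩ := Submodule.exists_iterate_succ_mem_span_range_iterate (R := R) f x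
  obtain ⟨c, hc⟩ := (Submodule.mem_span_range_iff_exists_fun R).mp hn
  refine ⟨n + 1, n.succ_pos, -c, ?_⟩
  simp only [Pi.neg_apply, neg_smul, Finset.sum_neg_distrib, hc, add_neg_cancel]

theorem stmt_15_general (R : Type*) [CommRing R]
    (M : Type*) [AddCommGroup M] [Module R M] (hM : IsFiniteLength R M)
    (φ : M →+ M) (x : M) :
    ∃ n : ℕ, 0 < n ∧ ∃ c : Fin n → R,
      φ^[n] x + ∑ i : Fin n, c i • φ^[(i : ℕ)] x = 0 := by
  have : IsNoetherian R M := (isFiniteLength_iff_isNoetherian_isArtinian.mp hM).1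
  exact Module.exists_monic_iterate_relation φ x

/-- Let `R` be a noetherian local `𝔽_p`-algebra and `M` a finite length `R`-module with
a Frobenius-semilinear additive endomorphism `φ` (`φ(r • x) = r^p • φ(x)`). Then every
`x ∈ M` is annihilated by a monic additive polynomial in `φ`: there are `n ≥ 1` and
`c_0, …, c_{n-1} ∈ R` with `φ^n(x) + ∑ c_i φ^i(x) = 0`. -/
theorem stmt_15 (p : ℕ) [Fact p.Prime] (R : Type*) [CommRing R] [IsNoetherianRing R]
    [IsLocalRing R] [CharP R p]
    (M : Type*) [AddCommGroup M] [Module R M] (hM : IsFiniteLength R M)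
    (φ : M →+ M) (hφ : ∀ (r : R) (x : M), φ (r • x) = r ^ p • φ x) (x : M) :
    ∃ n : ℕ, 0 < n ∧ ∃ c : Fin n → R,
      φ^[n] x + ∑ i : Fin n, c i • φ^[(i : ℕ)] x = 0 :=
  stmt_15_general R M hM φ x
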